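/- Under the hypotheses of the model-free CBF theorem, the composite function h_V(t) = -V(t) + α_e·h_q(q(t)) with α_e = k₁(λ - α)/C_h satisfies d/dt h_V(t) ≥ -α·h_V(t) whenever V̇ ≤ -λV, ⟨∇h_q(q), q̇_s⟩ ≥ -α h_q(q), ‖∇h_q(q)‖ ≤ C_h, and ‖ė‖ ≤ V/k₁. -/

import Mathlib

/-! Differentiating along the trajectory gives
`ḣ_V = -V̇ + α_e ⟪∇h_q, q̇_s⟫ + α_e ⟪∇h_q, ė⟫`. The first two terms are bounded below by `λV` and
`-α α_e h_q` by the decay and safety hypotheses, and Cauchy–Schwarz bounds the last by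
`-α_e C_h ‖ė‖ ≥ -(λ - α) V`; the choice `α_e = k₁ (λ - α) / C_h` is exactly what makes this
tracking-error term consume the surplus decay `(λ - α) V`, leaving `α V - α α_e h_q = -α h_V`. -/

open scoped RealInnerProductSpace

theorem neg_mul_le_real_inner_of_norm_le {E : Type*} [NormedAddCommGroup E] [InnerProductSpace ℝ E]
    {g e : E} {C r : ℝ} (hC : 0 ≤ C) (hg : ‖g‖ ≤ C) (he : ‖e‖ ≤ r) : -(C * r) ≤ ⟪g, e⟫ :=
  calc -(C * r) ≤ -(‖g‖ * ‖e‖) := neg_le_neg (mul_le_mul hg he (norm_nonneg e) hC)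
    _ ≤ ⟪g, e⟫ := neg_le_of_abs_le (abs_real_inner_le_norm g e)

theorem HasGradientAt.comp_hasDerivAt {E : Type*} [NormedAddCommGroup E] [InnerProductSpace ℝ E]
    [CompleteSpace E] {f : E → ℝ} {g : E} {q : ℝ → E} {q' : E} {t : ℝ}
    (hf : HasGradientAt f g (q t)) (hq : HasDerivAt q q' t) :
    HasDerivAt (fun s => f (q s)) ⟪g, q'⟫ t := by
  simpa [Function.comp_def] using hf.hasFDerivAt.comp_hasDerivAt t hq

theorem neg_mul_barrier_le_of_decay {C k lam α V V' h dqs de : ℝ} (hC : 0 < C) (hk : 0 < k)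
    (hαlam : α ≤ lam) (hdecay : V' ≤ -lam * V) (hsafe : -α * h ≤ dqs)
    (herr : -(C * (V / k)) ≤ de) :
    -α * (-V + k * (lam - α) / C * h) ≤ -V' + k * (lam - α) / C * (dqs + de) := by
  have hc : 0 ≤ k * (lam - α) / C := div_nonneg (mul_nonneg hk.le (sub_nonneg.2 hαlam)) hC.le
  have herr_cost : k * (lam - α) / C * (C * (V / k)) = (lam - α) * V := by
    field_simp
  nlinarith [mul_le_mul_of_nonneg_left hsafe hc, mul_le_mul_of_nonneg_left herr hc]

theorem stmt_13_general {n : ℕ} (hq : EuclideanSpace ℝ (Fin n) → ℝ) (hhq : ContDiff ℝ 1 hq)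
    (C_h k₁ lam α : ℝ) (hCh : 0 < C_h) (hk₁ : 0 < k₁) (hlam : α < lam)
    (hgrad : ∀ y : EuclideanSpace ℝ (Fin n), ‖gradient hq y‖ ≤ C_h)
    (q qs e : ℝ → EuclideanSpace ℝ (Fin n))
    (hq' : ∀ t : ℝ, HasDerivAt q (qs t + e t) t)
    (V V' : ℝ → ℝ) (hV : ∀ t : ℝ, HasDerivAt V (V' t) t)
    (t : ℝ)
    (hVdecay : V' t ≤ -lam * V t)
    (hsafe : -α * hq (q t) ≤ ⟪gradient hq (q t), qs t⟫)
    (herr : ‖e t‖ ≤ V t / k₁) :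
    -α * (-V t + (k₁ * (lam - α) / C_h) * hq (q t)) ≤
      deriv (fun s => -V s + (k₁ * (lam - α) / C_h) * hq (q s)) t := by
  have hgrad_at : HasGradientAt hq (gradient hq (q t)) (q t) :=
    (hhq.differentiable one_ne_zero (q t)).hasGradientAt
  have hderiv : HasDerivAt (fun s => -V s + (k₁ * (lam - α) / C_h) * hq (q s))
      (-V' t + (k₁ * (lam - α) / C_h) * ⟪gradient hq (q t), qs t + e t⟫) t :=
    (hV t).neg.add ((hgrad_at.comp_hasDerivAt (hq' t)).const_mul _)
  rw [hderiv.deriv, inner_add_right]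
  exact neg_mul_barrier_le_of_decay hCh hk₁ hlam.le hVdecay hsafe
    (neg_mul_le_real_inner_of_norm_le hCh.le (hgrad _) herr)

theorem stmt_13 {n : ℕ} (hq : EuclideanSpace ℝ (Fin n) → ℝ) (hhq : ContDiff ℝ 1 hq)
    (C_h k₁ lam α : ℝ) (hCh : 0 < C_h) (hk₁ : 0 < k₁) (hα : 0 < α) (hlam : α < lam)
    (hgrad : ∀ y : EuclideanSpace ℝ (Fin n), ‖gradient hq y‖ ≤ C_h)
    (q qs e : ℝ → EuclideanSpace ℝ (Fin n))
    (hq' : ∀ t : ℝ, HasDerivAt q (qs t + e t) t)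
    (V V' : ℝ → ℝ) (hV : ∀ t : ℝ, HasDerivAt V (V' t) t)
    (t : ℝ)
    (hVdecay : V' t ≤ -lam * V t)
    (hsafe : -α * hq (q t) ≤ ⟪gradient hq (q t), qs t⟫)
    (herr : ‖e t‖ ≤ V t / k₁) :
    -α * (-V t + (k₁ * (lam - α) / C_h) * hq (q t)) ≤
      deriv (fun s => -V s + (k₁ * (lam - α) / C_h) * hq (q s)) t :=
  stmt_13_general hq hhq C_h k₁ lam α hCh hk₁ hlam hgrad q qs e hq' V V' hV t hVdecay hsafe herr
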